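/- arXiv:2003.09342 — 2 statements merged into one kernel-verified Lean document; each statement's English description precedes it below -/
import Mathlib

section
/- For each pair of nonnegative integers $(n,m)$, let $F_{n,m} : [0,+\infty)^n \times [0,+\infty)^m \to [0,+\infty]$ be measurable. Then the following identity holds in $[0,+\infty]$: $\sum_{N=0}^{\infty} \frac{1}{N!} \int_{[0,+\infty)^N} \Big( \sum_{A \subseteq \{1,\dots,N\}} F_{N-|A|,\,|A|}\big((x_i)_{i \notin A}, (x_i)_{i \in A}\big) \Big)\, dx_1 \cdots dx_N \;=\; \sum_{n=0}^{\infty} \sum_{m=0}^{\infty} \frac{1}{n!\, m!} \int_{[0,+\infty)^n} \int_{[0,+\infty)^m} F_{n,m}(x, y)\, dy\, dx$, where the inner sum on the left runs over all $2^N$ subsets $A$ of $\{1,\dots,N\}$, the variables indexed by $A$ and by its complement are each taken in increasing order of index, and $|A|$ denotes the cardinality of $A$. -/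
open MeasureTheory ENNReal

/-- The product measure on `[0, +∞)^n`, i.e., the `n`-fold product of Lebesgue
measure restricted to `[0, +∞)`. -/
noncomputable def orthantMeasure (n : ℕ) : Measure (Fin n → ℝ) :=
  Measure.pi fun _ => volume.restrict (Set.Ici 0)

instance orthantMeasure.sigmaFinite (n : ℕ) : SigmaFinite (orthantMeasure n) := by
  unfold orthantMeasure; infer_instance

lemma orthant_key {N n m : ℕ} (G : (Fin n → ℝ) → (Fin m → ℝ) → ℝ≥0∞)
    (hG : Measurable (Function.uncurry G)) (A : Finset (Fin N))
    (hA : A.card = m) (hAc : Aᶜ.card = n) :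
    ∫⁻ x : Fin N → ℝ,
        G (fun i => x ↑(Aᶜ.orderIsoOfFin hAc i)) (fun i => x ↑(A.orderIsoOfFin hA i))
        ∂(orthantMeasure N)
      = ∫⁻ x : Fin n → ℝ, ∫⁻ y : Fin m → ℝ, G x y ∂(orthantMeasure m) ∂(orthantMeasure n) := by
  classical
  set μ : Measure ℝ := volume.restrict (Set.Ici 0) with hμ
  set p : Fin N → Prop := fun i => i ∈ Aᶜ with hp
  letI iC : Fintype (Subtype p) := Subtype.fintype p
  letI iA : Fintype {i // ¬ p i} := Subtype.fintype _
  let eC : Fin n ≃ Subtype p := (Aᶜ.orderIsoOfFin hAc).toEquiv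
  let eA : Fin m ≃ {i // ¬ p i} :=
    (A.orderIsoOfFin hA).toEquiv.trans (Equiv.subtypeEquivRight (fun i => by simp [hp]))
  have hT : MeasurePreserving
      ((Prod.map ((MeasurableEquiv.piCongrLeft (fun _ : Subtype p => ℝ) eC).symm)
        ((MeasurableEquiv.piCongrLeft (fun _ : {i // ¬ p i} => ℝ) eA).symm)) ∘
        (MeasurableEquiv.piEquivPiSubtypeProd (fun _ : Fin N => ℝ) p))
      (orthantMeasure N) ((orthantMeasure n).prod (orthantMeasure m)) :=
    ((MeasurePreserving.symm _
        (measurePreserving_piCongrLeft (fun _ : Subtype p => μ) eC)).prod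
      (MeasurePreserving.symm _
        (measurePreserving_piCongrLeft (fun _ : {i // ¬ p i} => μ) eA))).comp
      (measurePreserving_piEquivPiSubtypeProd (fun _ : Fin N => μ) p)
  have key := hT.lintegral_comp hG
  rw [lintegral_prod _ hG.aemeasurable] at key
  calc
    ∫⁻ x : Fin N → ℝ,
        G (fun i => x ↑(Aᶜ.orderIsoOfFin hAc i)) (fun i => x ↑(A.orderIsoOfFin hA i))
        ∂(orthantMeasure N)
      = ∫⁻ x : Fin N → ℝ, Function.uncurry G
          ((Prod.map ((MeasurableEquiv.piCongrLeft (fun _ : Subtype p => ℝ) eC).symm)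
            ((MeasurableEquiv.piCongrLeft (fun _ : {i // ¬ p i} => ℝ) eA).symm) ∘
            (MeasurableEquiv.piEquivPiSubtypeProd (fun _ : Fin N => ℝ) p)) x)
          ∂(orthantMeasure N) := by
        refine lintegral_congr fun x => ?_
        simp only [Function.comp_apply, Prod.map, Function.uncurry,
          MeasurableEquiv.piEquivPiSubtypeProd, Equiv.piEquivPiSubtypeProd,
          MeasurableEquiv.piCongrLeft, MeasurableEquiv.coe_mk, Equiv.coe_fn_mk,
          MeasurableEquiv.symm_mk, Equiv.piCongrLeft_symm_apply]
        rfl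
    _ = ∫⁻ x : Fin n → ℝ, ∫⁻ y : Fin m → ℝ, Function.uncurry G (x, y)
          ∂(orthantMeasure m) ∂(orthantMeasure n) := key
    _ = ∫⁻ x : Fin n → ℝ, ∫⁻ y : Fin m → ℝ, G x y
          ∂(orthantMeasure m) ∂(orthantMeasure n) := rfl

lemma fact_arith {N k : ℕ} (hk : k ≤ N) :
    (N.factorial : ℝ≥0∞)⁻¹ * (N.choose k : ℝ≥0∞)
      = (((N - k).factorial : ℝ≥0∞) * (k.factorial : ℝ≥0∞))⁻¹ := by
  have h : (N - k).factorial * k.factorial * N.choose k = N.factorial := by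
    rw [← Nat.choose_mul_factorial_mul_factorial hk]; ring
  have hbc : ((N - k).factorial : ℝ≥0∞) * (k.factorial : ℝ≥0∞) * (N.choose k : ℝ≥0∞)
      = (N.factorial : ℝ≥0∞) := by exact_mod_cast h
  have hc0 : (N.choose k : ℝ≥0∞) ≠ 0 := Nat.cast_ne_zero.mpr (Nat.choose_pos hk).ne'
  have hbt : ((N - k).factorial : ℝ≥0∞) * (k.factorial : ℝ≥0∞) ≠ ⊤ :=
    ENNReal.mul_ne_top (ENNReal.natCast_ne_top _) (ENNReal.natCast_ne_top _)
  calc (N.factorial : ℝ≥0∞)⁻¹ * (N.choose k : ℝ≥0∞)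
      = (((N - k).factorial : ℝ≥0∞) * (k.factorial : ℝ≥0∞) * (N.choose k : ℝ≥0∞))⁻¹
          * (N.choose k : ℝ≥0∞) := by rw [hbc]
    _ = (((N - k).factorial : ℝ≥0∞) * (k.factorial : ℝ≥0∞))⁻¹
          * ((N.choose k : ℝ≥0∞)⁻¹ * (N.choose k : ℝ≥0∞)) := by
        rw [ENNReal.mul_inv (Or.inr (ENNReal.natCast_ne_top _)) (Or.inl hbt), mul_assoc]
    _ = (((N - k).factorial : ℝ≥0∞) * (k.factorial : ℝ≥0∞))⁻¹ := by
        rw [ENNReal.inv_mul_cancel hc0 (ENNReal.natCast_ne_top _), mul_one]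

/-- Series form of the fundamental identity for the Lebesgue--Poisson measure:
for measurable `F_{n,m} : [0,∞)^n × [0,∞)^m → [0,∞]`,
`∑_N (1/N!) ∫_{[0,∞)^N} ∑_{A ⊆ {1,…,N}} F_{N-|A|,|A|}((x_i)_{i∉A}, (x_i)_{i∈A}) dx
  = ∑_n ∑_m (1/(n! m!)) ∫_{[0,∞)^n} ∫_{[0,∞)^m} F_{n,m}(x,y) dy dx`,
the sub-tuples being enumerated in increasing order of index. -/
theorem lebesgue_poisson_identity
    (F : (n m : ℕ) → (Fin n → ℝ) → (Fin m → ℝ) → ℝ≥0∞)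
    (hF : ∀ n m, Measurable (Function.uncurry (F n m))) :
    (∑' N : ℕ, (N.factorial : ℝ≥0∞)⁻¹ *
        ∫⁻ x : Fin N → ℝ,
          (∑ A : Finset (Fin N),
            F (N - A.card) A.card
              (fun i => x ↑(Aᶜ.orderIsoOfFin (by simp [Finset.card_compl]) i))
              (fun i => x ↑(A.orderIsoOfFin rfl i)))
          ∂(orthantMeasure N))
      = ∑' n : ℕ, ∑' m : ℕ, ((n.factorial : ℝ≥0∞) * (m.factorial : ℝ≥0∞))⁻¹ *
          ∫⁻ x : Fin n → ℝ, ∫⁻ y : Fin m → ℝ,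
            F n m x y ∂(orthantMeasure m) ∂(orthantMeasure n) := by
  classical
  set J : ℕ → ℕ → ℝ≥0∞ := fun n m =>
    ∫⁻ x : Fin n → ℝ, ∫⁻ y : Fin m → ℝ, F n m x y ∂(orthantMeasure m) ∂(orthantMeasure n)
    with hJ
  set u : ℕ × ℕ → ℝ≥0∞ := fun q =>
    ((q.1.factorial : ℝ≥0∞) * (q.2.factorial : ℝ≥0∞))⁻¹ * J q.1 q.2 with hu
  have hterm : ∀ N : ℕ,
      (∫⁻ x : Fin N → ℝ,
          (∑ A : Finset (Fin N),
            F (N - A.card) A.card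
              (fun i => x ↑(Aᶜ.orderIsoOfFin (by simp [Finset.card_compl]) i))
              (fun i => x ↑(A.orderIsoOfFin rfl i))) ∂(orthantMeasure N))
        = ∑ A : Finset (Fin N), J (N - A.card) A.card := by
    intro N
    rw [lintegral_finset_sum]
    · exact Finset.sum_congr rfl fun A _ =>
        orthant_key _ (hF _ _) A rfl (by simp [Finset.card_compl])
    · intro A _
      exact (hF _ _).comp
        (Measurable.prodMk (measurable_pi_lambda _ fun i => measurable_pi_apply _)
          (measurable_pi_lambda _ fun i => measurable_pi_apply _))
  calc
    (∑' N : ℕ, (N.factorial : ℝ≥0∞)⁻¹ *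
        ∫⁻ x : Fin N → ℝ,
          (∑ A : Finset (Fin N),
            F (N - A.card) A.card
              (fun i => x ↑(Aᶜ.orderIsoOfFin (by simp [Finset.card_compl]) i))
              (fun i => x ↑(A.orderIsoOfFin rfl i)))
          ∂(orthantMeasure N))
      = ∑' N : ℕ, (N.factorial : ℝ≥0∞)⁻¹ * ∑ A : Finset (Fin N), J (N - A.card) A.card := by
        exact tsum_congr fun N => by rw [hterm N]
    _ = ∑' N : ℕ, ∑ q ∈ Finset.HasAntidiagonal.antidiagonal N, u q := by
        refine tsum_congr fun N => ?_
        have hs : ∑ A : Finset (Fin N), J (N - A.card) A.card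
            = ∑ k ∈ Finset.range (N + 1), (N.choose k) • J (N - k) k := by
          rw [← Finset.powerset_univ]
          simpa using Finset.sum_powerset_apply_card (fun c => J (N - c) c)
            (x := (Finset.univ : Finset (Fin N)))
        rw [hs, Finset.mul_sum]
        rw [Finset.Nat.sum_antidiagonal_eq_sum_range_succ_mk]
        rw [← Finset.sum_range_reflect (fun k => u (k, N - k)) (N + 1)]
        refine Finset.sum_congr rfl fun k hk => ?_
        have hkN : k ≤ N := by
          simpa [Nat.lt_succ_iff] using Finset.mem_range.mp hk
        have h1 : N - (N - k) = k := Nat.sub_sub_self hkN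
        simp only [Nat.add_sub_cancel, h1, hu]
        rw [nsmul_eq_mul, ← mul_assoc, fact_arith hkN]
    _ = ∑' q : ℕ × ℕ, u q := by
        rw [← Finset.HasAntidiagonal.sigmaAntidiagonalEquivProd.tsum_eq u, ENNReal.tsum_sigma']
        exact tsum_congr fun N => (Finset.tsum_subtype (Finset.HasAntidiagonal.antidiagonal N) u).symm
    _ = ∑' n : ℕ, ∑' m : ℕ, ((n.factorial : ℝ≥0∞) * (m.factorial : ℝ≥0∞))⁻¹ *
          ∫⁻ x : Fin n → ℝ, ∫⁻ y : Fin m → ℝ,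
            F n m x y ∂(orthantMeasure m) ∂(orthantMeasure n) := by
        rw [ENNReal.tsum_prod']
end

section
/- Let $m > 0$ and for each $n \geq 0$ let $f^{(n)} : [0,+\infty)^n \to \mathbf{R}$ be measurable (with $f^{(0)} \in \mathbf{R}$), such that $\sum_{n=0}^{\infty} \frac{1 + mn}{n!} \int_{[0,+\infty)^n} |f^{(n)}(x_1,\dots,x_n)|\, dx_1 \cdots dx_n < \infty$. Then $\sum_{n=0}^{\infty} \frac{1}{n!} \int_{[0,+\infty)^n} \Big| m \int_0^{+\infty} f^{(n+1)}(x, x_1, \dots, x_n)\, dx \Big|\, dx_1 \cdots dx_n \;\leq\; \sum_{n=0}^{\infty} \frac{1 + mn}{n!} \int_{[0,+\infty)^n} |f^{(n)}(x_1,\dots,x_n)|\, dx_1 \cdots dx_n$. -/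
open MeasureTheory ENNReal

lemma measurable_finCons (n : ℕ) :
    Measurable (fun p : ℝ × (Fin n → ℝ) => (Fin.cons p.1 p.2 : Fin (n + 1) → ℝ)) := by
  have h := (MeasurableEquiv.piFinSuccAbove (fun _ : Fin (n + 1) => ℝ) 0).symm.measurable
  have he : (fun p : ℝ × (Fin n → ℝ) => (Fin.cons p.1 p.2 : Fin (n + 1) → ℝ))
      = ⇑(MeasurableEquiv.piFinSuccAbove (fun _ : Fin (n + 1) => ℝ) 0).symm := by
    funext p
    exact (Fin.insertNth_zero' p.1 p.2).symm
  rw [he]; exact h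

lemma orthant_cons_lintegral (n : ℕ) (F : (Fin (n + 1) → ℝ) → ℝ≥0∞)
    (hF : Measurable F) :
    ∫⁻ x : Fin n → ℝ, ∫⁻ t in Set.Ici (0 : ℝ), F (Fin.cons t x) ∂volume
        ∂(orthantMeasure n)
      = ∫⁻ y, F y ∂(orthantMeasure (n + 1)) := by
  have hmp := (MeasureTheory.measurePreserving_piFinSuccAbove
    (fun _ : Fin (n + 1) => (volume : Measure ℝ).restrict (Set.Ici 0)) 0).symm
  have h1 : ∫⁻ y, F y ∂(orthantMeasure (n + 1))
      = ∫⁻ p : ℝ × (Fin n → ℝ),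
          F ((MeasurableEquiv.piFinSuccAbove (fun _ => ℝ) 0).symm p)
          ∂(((volume : Measure ℝ).restrict (Set.Ici 0)).prod (orthantMeasure n)) :=
    (hmp.lintegral_comp hF).symm
  rw [h1]
  have h2 : ∀ p : ℝ × (Fin n → ℝ),
      F ((MeasurableEquiv.piFinSuccAbove (fun _ : Fin (n + 1) => ℝ) 0).symm p)
        = F (Fin.cons p.1 p.2) := by
    intro p
    congr 1
    exact Fin.insertNth_zero' p.1 p.2
  simp only [h2]
  rw [MeasureTheory.lintegral_prod (fun p : ℝ × (Fin n → ℝ) => F (Fin.cons p.1 p.2))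
    ((hF.comp (measurable_finCons n)).aemeasurable)]
  rw [lintegral_lintegral_swap]
  exact (hF.comp ((measurable_finCons n).comp measurable_swap)).aemeasurable

/-- Series form of the bound `‖B₂ f‖ ≤ ‖f‖ₘ` for the death operator of the
tumor-growth model: for mortality rate `m > 0` and measurable components
`f⁽ⁿ⁾ : [0,∞)^n → ℝ` with `∑_n ((1+mn)/n!) ∫_{[0,∞)^n} |f⁽ⁿ⁾| < ∞`, one has
`∑_n (1/n!) ∫_{[0,∞)^n} |m ∫_0^∞ f⁽ⁿ⁺¹⁾(x, x₁,…,xₙ) dx| dx₁⋯dxₙ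
  ≤ ∑_n ((1+mn)/n!) ∫_{[0,∞)^n} |f⁽ⁿ⁾(x₁,…,xₙ)| dx₁⋯dxₙ`. -/
theorem death_operator_norm_bound
    (m : ℝ) (hm : 0 < m)
    (f : (n : ℕ) → (Fin n → ℝ) → ℝ)
    (hf_meas : ∀ n, Measurable (f n))
    (hsum : (∑' n : ℕ, ENNReal.ofReal ((1 + m * n) / n.factorial) *
        ∫⁻ x : Fin n → ℝ, ENNReal.ofReal |f n x| ∂(orthantMeasure n)) ≠ ⊤) :
    (∑' n : ℕ, (n.factorial : ℝ≥0∞)⁻¹ *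
        ∫⁻ x : Fin n → ℝ,
          ENNReal.ofReal |m * ∫ t in Set.Ici (0 : ℝ), f (n + 1) (Fin.cons t x)|
          ∂(orthantMeasure n))
      ≤ ∑' n : ℕ, ENNReal.ofReal ((1 + m * n) / n.factorial) *
          ∫⁻ x : Fin n → ℝ, ENNReal.ofReal |f n x| ∂(orthantMeasure n) := by
  set b : ℕ → ℝ≥0∞ := fun n => ENNReal.ofReal ((1 + m * n) / n.factorial) *
      ∫⁻ x : Fin n → ℝ, ENNReal.ofReal |f n x| ∂(orthantMeasure n) with hb
  have key : ∀ n : ℕ, (n.factorial : ℝ≥0∞)⁻¹ *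
      ∫⁻ x : Fin n → ℝ,
        ENNReal.ofReal |m * ∫ t in Set.Ici (0 : ℝ), f (n + 1) (Fin.cons t x)|
        ∂(orthantMeasure n) ≤ b (n + 1) := by
    intro n
    have hpt : ∀ x : Fin n → ℝ,
        ENNReal.ofReal |m * ∫ t in Set.Ici (0 : ℝ), f (n + 1) (Fin.cons t x)|
          ≤ ENNReal.ofReal m *
            ∫⁻ t in Set.Ici (0 : ℝ), ENNReal.ofReal |f (n + 1) (Fin.cons t x)| := by
      intro x
      rw [abs_mul, ENNReal.ofReal_mul (abs_nonneg m), abs_of_pos hm]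
      refine mul_le_mul_right ?_ _
      calc ENNReal.ofReal |∫ t in Set.Ici (0 : ℝ), f (n + 1) (Fin.cons t x)|
          = (‖∫ t in Set.Ici (0 : ℝ), f (n + 1) (Fin.cons t x)‖₊ : ℝ≥0∞) := by
            rw [← enorm_eq_nnnorm, Real.enorm_eq_ofReal_abs]
        _ ≤ ∫⁻ t in Set.Ici (0 : ℝ), (‖f (n + 1) (Fin.cons t x)‖₊ : ℝ≥0∞) :=
            enorm_integral_le_lintegral_enorm _
        _ = ∫⁻ t in Set.Ici (0 : ℝ), ENNReal.ofReal |f (n + 1) (Fin.cons t x)| := by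
            simp_rw [← enorm_eq_nnnorm, Real.enorm_eq_ofReal_abs]
    have hmeasF : Measurable (fun y : Fin (n + 1) → ℝ => ENNReal.ofReal |f (n + 1) y|) :=
      ((hf_meas (n + 1)).abs).ennreal_ofReal
    have hI : ∫⁻ x : Fin n → ℝ,
        ENNReal.ofReal |m * ∫ t in Set.Ici (0 : ℝ), f (n + 1) (Fin.cons t x)|
        ∂(orthantMeasure n)
        ≤ ENNReal.ofReal m *
          ∫⁻ y, ENNReal.ofReal |f (n + 1) y| ∂(orthantMeasure (n + 1)) := by
      calc _ ≤ ∫⁻ x : Fin n → ℝ, (ENNReal.ofReal m *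
            ∫⁻ t in Set.Ici (0 : ℝ), ENNReal.ofReal |f (n + 1) (Fin.cons t x)|)
            ∂(orthantMeasure n) := lintegral_mono hpt
        _ = ENNReal.ofReal m * ∫⁻ x : Fin n → ℝ,
            (∫⁻ t in Set.Ici (0 : ℝ), ENNReal.ofReal |f (n + 1) (Fin.cons t x)|)
            ∂(orthantMeasure n) := lintegral_const_mul _ (by
              exact Measurable.lintegral_prod_left
                (hmeasF.comp (measurable_finCons n)))
        _ = _ := by rw [orthant_cons_lintegral n _ hmeasF]
    refine le_trans (mul_le_mul_right hI _) ?_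
    rw [hb, ← mul_assoc]
    refine mul_le_mul_left ?_ _
    have hfact : ((n.factorial : ℝ≥0∞))⁻¹ = ENNReal.ofReal (1 / n.factorial) := by
      rw [ENNReal.ofReal_div_of_pos (by positivity), ENNReal.ofReal_one,
        ENNReal.ofReal_natCast, one_div]
    rw [hfact, ← ENNReal.ofReal_mul (by positivity)]
    apply ENNReal.ofReal_le_ofReal
    rw [Nat.factorial_succ, Nat.cast_mul,
      div_mul_eq_mul_div, one_mul, div_le_div_iff₀ (by positivity) (by positivity)]
    have hfp : (0 : ℝ) < (n.factorial : ℝ) := by positivity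
    push_cast
    nlinarith [mul_nonneg hm.le (Nat.cast_nonneg n : (0:ℝ) ≤ n)]
  calc _ ≤ ∑' n : ℕ, b (n + 1) := ENNReal.tsum_le_tsum key
    _ ≤ ∑' n : ℕ, b n := ENNReal.tsum_comp_le_tsum_of_injective Nat.succ_injective b
end
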